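/- Let X be a pre-Hilbert module over a C*-algebra A and φ a positive linear functional on A. If n ≥ 2 and x₁,…,xₙ, z ∈ X satisfy φ(|z|²)=1, then: |∏_{i=1}^{n} φ(⟨x_i,z⟩)| ≤ (1/2)·( ∏_{i=1}^{n} √(φ(|x_i|²)) + |φ(⟨x₁,x₂⟩)·∏_{i=3}^{n} φ(⟨x_i,z⟩)| ). -/

import Mathlib

/-!
Buzano's inequality: if `‖e‖ = 1` then `2 |⟪x, e⟫ ⟪e, y⟫| ≤ ‖x‖ ‖y‖ + |⟪x, y⟫|`, because the
reflection `w = 2 ⟪e, x⟫ e - x` of `x` in the line through `e` has `‖w‖ = ‖x‖` and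
`⟪w, y⟫ = 2 ⟪x, e⟫ ⟪e, y⟫ - ⟪x, y⟫`, so Cauchy–Schwarz for `w, y` gives it. Applying it to the
first two factors and Cauchy–Schwarz `|⟪xᵢ, e⟫| ≤ ‖xᵢ‖` to the others bounds the product.
In a pre-Hilbert module, `φ ∘ ⟪·, ·⟫` is a semi-inner product because a positive functional
commutes with `star`, and the theorem is this bound in the resulting pre-inner product space.
-/

open scoped ComplexOrder

/-- The `CStarModuleRight` class of the older Mathlib (right `A`-action via `Aᵐᵒᵖ`), restated because
Mathlib's `CStarModule` now uses a left action `[SMul A E]` with different axioms. -/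
class CStarModuleRight (A E : Type*) [NonUnitalSemiring A] [StarRing A]
    [Module ℂ A] [AddCommGroup E] [Module ℂ E] [PartialOrder A] [SMul Aᵐᵒᵖ E] [Norm A] [Norm E]
    extends Inner A E where
  inner_add_right {x} {y} {z} : inner x (y + z) = inner x y + inner x z
  inner_self_nonneg {x} : 0 ≤ inner x x
  inner_self {x} : inner x x = 0 ↔ x = 0
  inner_op_smul_right {a : A} {x y : E} : inner x (MulOpposite.op a • y) = inner x y * a
  inner_smul_right_complex {z : ℂ} {x} {y} : inner x (z • y) = z • inner x y
  star_inner x y : star (inner x y) = inner y x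
  norm_eq_sqrt_norm_inner_self x : ‖x‖ = Real.sqrt ‖inner x x‖

open Finset
open scoped InnerProductSpace

theorem prod_Icc_one_eq_mul_mul {M : Type*} [CommMonoid M] (f : ℕ → M) {n : ℕ} (hn : 2 ≤ n) :
    ∏ i ∈ Icc 1 n, f i = f 1 * f 2 * ∏ i ∈ Icc 3 n, f i := by
  rw [← insert_Icc_add_one_left_eq_Icc (by omega : 1 ≤ n), prod_insert (by simp),
    one_add_one_eq_two, ← insert_Icc_add_one_left_eq_Icc hn, prod_insert (by simp), mul_assoc]
  rfl

section Buzano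

variable {𝕜 E : Type*} [RCLike 𝕜] [SeminormedAddCommGroup E] [InnerProductSpace 𝕜 E]

theorem norm_sub_reflection_eq_norm {e : E} (he : ‖e‖ = 1) (x : E) :
    ‖(2 * ⟪e, x⟫_𝕜) • e - x‖ = ‖x‖ := by
  have hre : RCLike.re ⟪(2 * ⟪e, x⟫_𝕜) • e, x⟫_𝕜 = 2 * ‖⟪e, x⟫_𝕜‖ ^ 2 := by
    rw [inner_smul_left, map_mul (starRingEnd 𝕜), map_ofNat, mul_assoc, RCLike.conj_mul]
    norm_cast
  have hsq : ‖(2 * ⟪e, x⟫_𝕜) • e - x‖ ^ 2 = ‖x‖ ^ 2 := by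
    rw [@norm_sub_sq 𝕜, hre, norm_smul, he, norm_mul, RCLike.norm_ofNat]
    ring
  exact (pow_left_inj₀ (norm_nonneg _) (norm_nonneg _) two_ne_zero).mp hsq

theorem two_mul_norm_inner_mul_inner_le {e : E} (he : ‖e‖ = 1) (x y : E) :
    2 * ‖⟪x, e⟫_𝕜 * ⟪e, y⟫_𝕜‖ ≤ ‖x‖ * ‖y‖ + ‖⟪x, y⟫_𝕜‖ := by
  have hw : ⟪(2 * ⟪e, x⟫_𝕜) • e - x, y⟫_𝕜 = 2 * (⟪x, e⟫_𝕜 * ⟪e, y⟫_𝕜) - ⟪x, y⟫_𝕜 := by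
    rw [inner_sub_left, inner_smul_left, map_mul, map_ofNat, inner_conj_symm, mul_assoc]
  calc 2 * ‖⟪x, e⟫_𝕜 * ⟪e, y⟫_𝕜‖
      = ‖⟪(2 * ⟪e, x⟫_𝕜) • e - x, y⟫_𝕜 + ⟪x, y⟫_𝕜‖ := by
        rw [hw, sub_add_cancel, norm_mul (2 : 𝕜), RCLike.norm_ofNat, norm_mul]
    _ ≤ ‖(2 * ⟪e, x⟫_𝕜) • e - x‖ * ‖y‖ + ‖⟪x, y⟫_𝕜‖ :=
        (norm_add_le _ _).trans (by gcongr; exact norm_inner_le_norm _ _)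
    _ = ‖x‖ * ‖y‖ + ‖⟪x, y⟫_𝕜‖ := by rw [norm_sub_reflection_eq_norm he]

theorem norm_prod_inner_le {e : E} (he : ‖e‖ = 1) (x : ℕ → E) {n : ℕ} (hn : 2 ≤ n) :
    ‖∏ i ∈ Icc 1 n, ⟪x i, e⟫_𝕜‖ ≤
      1 / 2 * (∏ i ∈ Icc 1 n, ‖x i‖ + ‖⟪x 1, x 2⟫_𝕜 * ∏ i ∈ Icc 3 n, ⟪x i, e⟫_𝕜‖) := by
  rw [prod_Icc_one_eq_mul_mul _ hn, prod_Icc_one_eq_mul_mul _ hn]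
  have hbuzano := two_mul_norm_inner_mul_inner_le (𝕜 := 𝕜) he (x 1) (x 2)
  have htail : ‖∏ i ∈ Icc 3 n, ⟪x i, e⟫_𝕜‖ ≤ ∏ i ∈ Icc 3 n, ‖x i‖ := by
    rw [norm_prod]
    refine prod_le_prod (fun _ _ ↦ norm_nonneg _) fun i _ ↦ ?_
    simpa [he] using norm_inner_le_norm (𝕜 := 𝕜) (x i) e
  rw [norm_mul, norm_inner_symm e] at hbuzano
  simp only [norm_mul]
  have := norm_nonneg (∏ i ∈ Icc 3 n, ⟪x i, e⟫_𝕜)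
  nlinarith [mul_le_mul_of_nonneg_right hbuzano this,
    mul_le_mul_of_nonneg_left htail (mul_nonneg (norm_nonneg (x 1)) (norm_nonneg (x 2)))]

end Buzano

namespace CStarModuleRight

section Sesquilinear

variable {A X : Type*} [NonUnitalSemiring A] [StarRing A] [Module ℂ A] [PartialOrder A] [Norm A]
  [AddCommGroup X] [Module ℂ X] [SMul Aᵐᵒᵖ X] [Norm X] [CStarModuleRight A X]

theorem inner_add_left (x y z : X) : inner A (x + y) z = inner A x z + inner A y z := by
  rw [← star_inner z, inner_add_right, star_add, star_inner, star_inner]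

theorem inner_smul_left_complex [StarModule ℂ A] (r : ℂ) (x y : X) :
    inner A (r • x) y = star r • inner A x y := by
  rw [← star_inner y, inner_smul_right_complex, star_smul, star_inner]

end Sesquilinear

variable {A : Type*} [NonUnitalCStarAlgebra A] [PartialOrder A]

/-- Lance's localization of a pre-Hilbert module at a positive functional, without the quotient
by null vectors. -/
def Localization (_f : A →ₚ[ℂ] ℂ) (X : Type*) : Type _ := X

variable (f : A →ₚ[ℂ] ℂ) {X : Type*} [AddCommGroup X] [Module ℂ X]

instance : AddCommGroup (Localization f X) := inferInstanceAs (AddCommGroup X)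

instance : Module ℂ (Localization f X) := inferInstanceAs (Module ℂ X)

def toLocalization : X ≃ₗ[ℂ] Localization f X := LinearEquiv.refl ℂ X

variable [StarOrderedRing A] [SMul Aᵐᵒᵖ X] [Norm X] [CStarModuleRight A X]

noncomputable abbrev localizationCore : PreInnerProductSpace.Core ℂ (Localization f X) where
  inner x y := f (inner A ((toLocalization f).symm x) ((toLocalization f).symm y))
  conj_inner_symm x y := by rw [← Complex.star_def, ← map_star, star_inner]
  re_inner_nonneg _ := (RCLike.nonneg_iff.mp (f.map_nonneg inner_self_nonneg)).1
  add_left x y z := by rw [map_add, inner_add_left, map_add]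
  smul_left x y r := by rw [map_smul, inner_smul_left_complex, map_smul, smul_eq_mul]; rfl

noncomputable instance : SeminormedAddCommGroup (Localization f X) :=
  InnerProductSpace.Core.toSeminormedAddCommGroup (c := localizationCore f)

noncomputable instance : InnerProductSpace ℂ (Localization f X) :=
  InnerProductSpace.ofCore (localizationCore f)

theorem inner_toLocalization (x y : X) :
    ⟪toLocalization f x, toLocalization f y⟫_ℂ = f (inner A x y) := rfl

theorem norm_toLocalization (x : X) :
    ‖toLocalization f x‖ = √(f (inner A x x)).re := rfl

end CStarModuleRight

/-- Corollary 2.2, inequality (2.2): a Buzano-type inequality in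
pre-Hilbert `C*`-modules. -/
theorem buzano_corollary
    {A X : Type*} [NonUnitalCStarAlgebra A] [PartialOrder A] [StarOrderedRing A]
    [AddCommGroup X] [Module ℂ X] [SMul Aᵐᵒᵖ X] [Norm X] [CStarModuleRight A X]
    (φ : A →ₗ[ℂ] ℂ) (hφ : ∀ b : A, 0 ≤ b → 0 ≤ φ b)
    (n : ℕ) (hn : 2 ≤ n) (x : ℕ → X) (z : X)
    (hz : φ (inner A z z : A) = 1) :
    ‖∏ i ∈ Finset.Icc 1 n, φ (inner A (x i) z : A)‖ ≤
      (1 / 2) *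
        ((∏ i ∈ Finset.Icc 1 n, Real.sqrt (φ (inner A (x i) (x i) : A)).re)
          + ‖φ (inner A (x 1) (x 2) : A) *
              ∏ i ∈ Finset.Icc 3 n, φ (inner A (x i) z : A)‖) := by
  let f := PositiveLinearMap.mk₀ φ hφ
  let ι := CStarModuleRight.toLocalization f (X := X)
  have hιz : ‖ι z‖ = 1 := by
    rw [CStarModuleRight.norm_toLocalization, show f (inner A z z) = 1 from hz, Complex.one_re,
      Real.sqrt_one]
  have h := norm_prod_inner_le (𝕜 := ℂ) hιz (fun i ↦ ι (x i)) hn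
  simp only [ι, CStarModuleRight.inner_toLocalization, CStarModuleRight.norm_toLocalization] at h
  exact h
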